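/- Let Z_τ = λI + ∑_{s=1}^τ g_s g_sᵀ with λ ≥ 1 and ‖g_s‖₂ ≤ 1 for all s. Then ∑_{τ=1}^T ‖g_τ‖²_{Z_{τ−1}^{−1}} ≤ 2 log(det(Z_T)/det(λI)), where ‖g‖²_M = gᵀ M g. -/

import Mathlib

/-!
By the matrix determinant lemma, `det Z_{τ+1} = det Z_τ * (1 + x_τ)` with
`x_τ = g_τ ⬝ Z_τ⁻¹ g_τ`, so `∑ log (1 + x_τ)` telescopes to `log (det Z_T / det Z_0)`.
Since `Z_τ ≥ λ I ≥ I`, `x_τ ≤ |g_τ|² ≤ 1`, and on `[0, 2]` one has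
`x ≤ 2 log (1 + x)`.
-/

open scoped Matrix

noncomputable def Zmat {p : ℕ} (lam : ℝ) (g : ℕ → Fin p → ℝ) (τ : ℕ) :
    Matrix (Fin p) (Fin p) ℝ :=
  lam • (1 : Matrix (Fin p) (Fin p) ℝ) +
    ∑ s ∈ Finset.range τ, Matrix.vecMulVec (g s) (g s)

namespace Matrix

variable {n : Type*} [DecidableEq n]

theorem det_add_vecMulVec [Fintype n] {R : Type*} [CommRing R] {A : Matrix n n R}
    (hA : IsUnit A.det) (u v : n → R) :
    (A + vecMulVec u v).det = A.det * (1 + v ⬝ᵥ A⁻¹ *ᵥ u) := by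
  have hfac : A + vecMulVec u v = A * (1 + A⁻¹ * vecMulVec u v) := by
    rw [Matrix.mul_add, Matrix.mul_one, ← Matrix.mul_assoc, mul_nonsing_inv _ hA, Matrix.one_mul]
  rw [hfac, det_mul, vecMulVec_eq Unit, ← Matrix.mul_assoc, ← replicateCol_mulVec,
    det_one_add_replicateCol_mul_replicateRow]

theorem PosDef.of_posSemidef_sub_one {A : Matrix n n ℝ} (h : (A - 1).PosSemidef) :
    A.PosDef := by
  simpa using PosDef.one.add_posSemidef h

/-- With `w = A⁻¹ v`, one has `v ⬝ v - v ⬝ A⁻¹ v = |v - w|² + w ⬝ (A - 1) w`. -/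
theorem dotProduct_inv_mulVec_le_of_posSemidef_sub_one [Fintype n] {A : Matrix n n ℝ}
    (h : (A - 1).PosSemidef) (v : n → ℝ) : v ⬝ᵥ A⁻¹ *ᵥ v ≤ v ⬝ᵥ v := by
  set w := A⁻¹ *ᵥ v
  have hAw : A *ᵥ w = v := by
    rw [mulVec_mulVec, mul_nonsing_inv _ (PosDef.of_posSemidef_sub_one h).det_pos.ne'.isUnit,
      one_mulVec]
  have key : v ⬝ᵥ v - v ⬝ᵥ w = (v - w) ⬝ᵥ (v - w) + w ⬝ᵥ (A - 1) *ᵥ w := by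
    rw [sub_mulVec, one_mulVec, hAw]
    simp only [dotProduct_sub, sub_dotProduct, dotProduct_comm w v]
    ring
  have h₁ : 0 ≤ (v - w) ⬝ᵥ (v - w) := by simpa using dotProduct_star_self_nonneg (v - w)
  have h₂ : 0 ≤ w ⬝ᵥ (A - 1) *ᵥ w := by simpa using h.dotProduct_mulVec_nonneg w
  linarith

end Matrix

theorem Real.le_two_mul_log_one_add {x : ℝ} (h₀ : 0 ≤ x) (h₂ : x ≤ 2) :
    x ≤ 2 * Real.log (1 + x) := by
  have := Real.le_log_one_add_of_nonneg h₀
  rw [div_le_iff₀ (by linarith)] at this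
  nlinarith

section Zmat

variable {p : ℕ} (lam : ℝ) (g : ℕ → Fin p → ℝ)

theorem Zmat_zero : Zmat lam g 0 = lam • 1 := by
  simp [Zmat]

theorem Zmat_succ (τ : ℕ) :
    Zmat lam g (τ + 1) = Zmat lam g τ + Matrix.vecMulVec (g τ) (g τ) := by
  rw [Zmat, Zmat, Finset.sum_range_succ, add_assoc]

variable {lam}

theorem posSemidef_Zmat_sub_one (hlam : 1 ≤ lam) (τ : ℕ) : (Zmat lam g τ - 1).PosSemidef := by
  have : Zmat lam g τ - 1 =
      (lam - 1) • 1 + ∑ s ∈ Finset.range τ, Matrix.vecMulVec (g s) (g s) := by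
    rw [Zmat, sub_smul, one_smul]; abel
  rw [this]
  refine (Matrix.PosSemidef.one.smul (sub_nonneg.2 hlam)).add
    (Matrix.posSemidef_sum _ fun s _ => ?_)
  simpa using Matrix.posSemidef_vecMulVec_self_star (g s)

theorem posDef_Zmat (hlam : 1 ≤ lam) (τ : ℕ) : (Zmat lam g τ).PosDef :=
  .of_posSemidef_sub_one (posSemidef_Zmat_sub_one g hlam τ)

end Zmat

open Finset Real in
theorem stmt10 {p : ℕ} (lam : ℝ) (hlam : 1 ≤ lam) (T : ℕ) (g : ℕ → Fin p → ℝ)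
    (hg : ∀ s, Real.sqrt (∑ i, g s i ^ 2) ≤ 1) :
    ∑ τ ∈ Finset.range T, (g τ ⬝ᵥ (Zmat lam g τ)⁻¹ *ᵥ g τ) ≤
      2 * Real.log ((Zmat lam g T).det / (lam • (1 : Matrix (Fin p) (Fin p) ℝ)).det) := by
  set x := fun τ => g τ ⬝ᵥ (Zmat lam g τ)⁻¹ *ᵥ g τ
  have hdet τ : 0 < (Zmat lam g τ).det := (posDef_Zmat g hlam τ).det_pos
  have hx_nonneg τ : 0 ≤ x τ := by
    simpa using (posDef_Zmat g hlam τ).inv.posSemidef.dotProduct_mulVec_nonneg (g τ)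
  have hx_le τ : x τ ≤ 1 :=
    calc x τ ≤ g τ ⬝ᵥ g τ :=
          Matrix.dotProduct_inv_mulVec_le_of_posSemidef_sub_one
            (posSemidef_Zmat_sub_one g hlam τ) _
      _ ≤ 1 := by simpa [dotProduct, sq] using hg τ
  have hlog τ : log (1 + x τ) = log (Zmat lam g (τ + 1)).det - log (Zmat lam g τ).det := by
    rw [Zmat_succ, Matrix.det_add_vecMulVec (hdet τ).ne'.isUnit,
      log_mul (hdet τ).ne' (by linarith [hx_nonneg τ])]
    ring
  calc ∑ τ ∈ range T, x τ
      ≤ ∑ τ ∈ range T, 2 * log (1 + x τ) :=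
        sum_le_sum fun τ _ => le_two_mul_log_one_add (hx_nonneg τ) (by linarith [hx_le τ])
    _ = 2 * (log (Zmat lam g T).det - log (Zmat lam g 0).det) := by
        rw [← mul_sum, sum_congr rfl fun τ _ => hlog τ,
          sum_range_sub (fun τ => log (Zmat lam g τ).det)]
    _ = _ := by rw [← Zmat_zero, log_div (hdet T).ne' (hdet 0).ne']
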